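/- Unique fixed point for the bipartite model at high temperature (Remark 1.2 and the fixed-point assertion of Theorem 1.5, specialized as in Section 1.4, combined with the bound β⋆ ≥ 1/(2√2)). For every t ∈ [0, 1/16), every y = (y₁,y₂) ∈ [0,∞)² and every x = (x₁,x₂) ∈ ℝ², there exists exactly one z = (z₁,z₂) ∈ [0,∞)² such that z_i = E[tanh²(√(2(y_i + t z_{3−i})) η + x_i χ)] for i = 1, 2. (Equivalently, z is the unique solution in [0,∞)² of z = ∇_y φ(y + t(z₂,z₁); x).) -/

import Mathlib

noncomputable section

open MeasureTheory ProbabilityTheory Real Filter Topology ENNReal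

/-- the standard Gaussian measure on `ℝ` -/
def gauss : Measure ℝ := gaussianReal 0 1

/-- `E[tanh²(a η + x χ)]`, where `η` is standard Gaussian and `χ` is an independent
uniform `±1` random variable -/
def Etanh2 (a x : ℝ) : ℝ :=
  ((∫ u, tanh (a * u + x) ^ 2 ∂gauss) + ∫ u, tanh (a * u - x) ^ 2 ∂gauss) / 2

/-- `E[log cosh(a η + x χ)]` -/
def Elogcosh (a x : ℝ) : ℝ :=
  ((∫ u, log (cosh (a * u + x)) ∂gauss) + ∫ u, log (cosh (a * u - x)) ∂gauss) / 2

/-- `φ(y;x) = Σ_{i=1}^2 ( −E[log cosh(√(2 yᵢ) η + xᵢ χ)] + yᵢ )` -/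
def phiRS (y x : ℝ × ℝ) : ℝ :=
  (-Elogcosh (Real.sqrt (2 * y.1)) x.1 + y.1) + (-Elogcosh (Real.sqrt (2 * y.2)) x.2 + y.2)

/-- fixed point of the replica-symmetric equation at `(t,y,x)`:
`zᵢ = E[tanh²(√(2(yᵢ + t z_{3−i})) η + xᵢ χ)]` with `z ∈ [0,∞)²` -/
def IsFPy (t : ℝ) (y x z : ℝ × ℝ) : Prop :=
  0 ≤ z.1 ∧ 0 ≤ z.2 ∧
  z.1 = Etanh2 (Real.sqrt (2 * (y.1 + t * z.2))) x.1 ∧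
  z.2 = Etanh2 (Real.sqrt (2 * (y.2 + t * z.1))) x.2

/-- fixed point at `(t,x)` (i.e. at `y = 0`):
`zᵢ = E[tanh²(√(2 t z_{3−i}) η + xᵢ χ)]` with `z ∈ [0,∞)²` -/
def IsFP (t : ℝ) (x z : ℝ × ℝ) : Prop :=
  0 ≤ z.1 ∧ 0 ≤ z.2 ∧
  z.1 = Etanh2 (Real.sqrt (2 * (t * z.2))) x.1 ∧
  z.2 = Etanh2 (Real.sqrt (2 * (t * z.1))) x.2

/-- `𝔣(x) = φ(t(z^x₂, z^x₁); x) − t z^x₁ z^x₂`, given a selection `zf` of fixed points -/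
def frakf (t : ℝ) (zf : ℝ × ℝ → ℝ × ℝ) (x : ℝ × ℝ) : ℝ :=
  phiRS (t * (zf x).2, t * (zf x).1) x - t * (zf x).1 * (zf x).2

/-- spin value of a boolean -/
def sgn (b : Bool) : ℝ := if b then 1 else -1

/-- the mean magnetization `m_N(σ)` -/
def mN (χ1 χ2 : ℕ → ℝ) (N : ℕ) (σ : (Fin N → Bool) × (Fin N → Bool)) : ℝ × ℝ :=
  ((N : ℝ)⁻¹ * ∑ i : Fin N, χ1 i.val * sgn (σ.1 i),
   (N : ℝ)⁻¹ * ∑ i : Fin N, χ2 i.val * sgn (σ.2 i))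

/-- the bipartite Sherrington--Kirkpatrick Hamiltonian `H_N(σ)` -/
def HamN (β : ℝ) (W : ℕ → ℕ → ℝ) (N : ℕ) (σ : (Fin N → Bool) × (Fin N → Bool)) : ℝ :=
  (β / Real.sqrt N) * ∑ i : Fin N, ∑ j : Fin N, W i.val j.val * sgn (σ.1 i) * sgn (σ.2 j)

/-- free energy with Curie--Weiss-type interaction `G`:
`−(1/N) log( 4^{−N} Σ_σ exp( H_N(σ) + N G(m_N(σ)) ) )` -/
def freeEnergy (β : ℝ) (W : ℕ → ℕ → ℝ) (χ1 χ2 : ℕ → ℝ) (G : ℝ × ℝ → ℝ) (N : ℕ) : ℝ :=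
  -(N : ℝ)⁻¹ * Real.log (((4 : ℝ) ^ N)⁻¹ *
    ∑ σ : (Fin N → Bool) × (Fin N → Bool),
      Real.exp (HamN β W N σ + N * G (mN χ1 χ2 N σ)))

/-- the Gibbs probability `⟨1_{m_N ∈ A}⟩_N^G` -/
def gibbsProb (β : ℝ) (W : ℕ → ℕ → ℝ) (χ1 χ2 : ℕ → ℝ) (G : ℝ × ℝ → ℝ) (N : ℕ)
    (A : Set (ℝ × ℝ)) : ℝ :=
  (∑ σ : (Fin N → Bool) × (Fin N → Bool),
      A.indicator (fun _ => (1 : ℝ)) (mN χ1 χ2 N σ) *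
        Real.exp (HamN β W N σ + N * G (mN χ1 χ2 N σ))) /
    ∑ σ : (Fin N → Bool) × (Fin N → Bool),
      Real.exp (HamN β W N σ + N * G (mN χ1 χ2 N σ))

/-- the law of a centered `±1` Bernoulli random variable -/
def bern : Measure ℝ :=
  (2 : ℝ≥0∞)⁻¹ • Measure.dirac (1 : ℝ) + (2 : ℝ≥0∞)⁻¹ • Measure.dirac (-1 : ℝ)

/-- all the disorder random variables, as a single family -/
def allRV {Ω : Type*} (W : ℕ → ℕ → Ω → ℝ) (χ1 χ2 : ℕ → Ω → ℝ) :
    (ℕ × ℕ) ⊕ (ℕ ⊕ ℕ) → Ω → ℝ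
  | Sum.inl ij => W ij.1 ij.2
  | Sum.inr (Sum.inl i) => χ1 i
  | Sum.inr (Sum.inr i) => χ2 i

/-- the disorder hypotheses: `(W_{ij})` i.i.d. standard Gaussians, `(χ¹ᵢ)`, `(χ²ᵢ)` i.i.d.
uniform on `{−1,1}`, all mutually independent -/
def DisorderHyp {Ω : Type*} [MeasurableSpace Ω] (P : Measure Ω)
    (W : ℕ → ℕ → Ω → ℝ) (χ1 χ2 : ℕ → Ω → ℝ) : Prop :=
  (∀ i j : ℕ, Measurable (W i j)) ∧
  (∀ i j : ℕ, Measure.map (W i j) P = gaussianReal 0 1) ∧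
  (∀ i : ℕ, Measurable (χ1 i)) ∧ (∀ i : ℕ, Measure.map (χ1 i) P = bern) ∧
  (∀ i : ℕ, Measurable (χ2 i)) ∧ (∀ i : ℕ, Measure.map (χ2 i) P = bern) ∧
  iIndepFun (allRV W χ1 χ2) P

/-! The right-hand side of the fixed-point equation is a contraction of `ℝ²` for `t < 1/16`, so
Banach's theorem gives existence and uniqueness; nonnegativity of a fixed point is automatic.
The contraction estimate is that `q ↦ E[tanh²(√(2q) η + c)]` is `4`-Lipschitz. In `a = √(2q)`
the derivative is `E[η · (tanh²)'(a η + c)]`, which Gaussian integration by parts turns into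
`a · E[(tanh²)''(a η + c)]`; since `|(tanh²)''| ≤ 2` this is at most `2a`, and the factor `a`
is exactly what absorbs the singularity of `√` at `0`. -/

open scoped NNReal

namespace Real

theorem hasDerivAt_tanh (x : ℝ) : HasDerivAt tanh (1 - tanh x ^ 2) x := by
  have h := (hasDerivAt_sinh x).div (hasDerivAt_cosh x) (cosh_pos x).ne'
  rw [show sinh / cosh = tanh from funext fun y => (tanh_eq_sinh_div_cosh y).symm] at h
  refine h.congr_deriv ?_
  rw [tanh_eq_sinh_div_cosh, div_pow, eq_sub_iff_add_eq, ← add_div,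
    div_eq_one_iff_eq (by positivity)]
  linarith [cosh_sq_sub_sinh_sq x]

@[fun_prop]
theorem continuous_tanh : Continuous tanh :=
  continuous_iff_continuousAt.2 fun x => (hasDerivAt_tanh x).continuousAt

end Real

def tanhSqDeriv (w : ℝ) : ℝ := 2 * tanh w * (1 - tanh w ^ 2)

def tanhSqDeriv2 (w : ℝ) : ℝ := 2 * (1 - tanh w ^ 2) * (1 - 3 * tanh w ^ 2)

theorem hasDerivAt_tanh_sq (w : ℝ) : HasDerivAt (fun w => tanh w ^ 2) (tanhSqDeriv w) w :=
  ((hasDerivAt_tanh w).pow 2).congr_deriv (by simp only [tanhSqDeriv]; ring)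

theorem hasDerivAt_tanhSqDeriv (w : ℝ) : HasDerivAt tanhSqDeriv (tanhSqDeriv2 w) w :=
  (((hasDerivAt_tanh w).const_mul 2).mul ((hasDerivAt_tanh_sq w).const_sub 1)).congr_deriv
    (by simp only [tanhSqDeriv, tanhSqDeriv2]; ring)

theorem abs_tanhSqDeriv_le (w : ℝ) : |tanhSqDeriv w| ≤ 2 := by
  have := abs_tanh_lt_one w
  have := tanh_sq_lt_one w
  rw [tanhSqDeriv, abs_mul, abs_mul, abs_two, abs_of_pos (by linarith : (0:ℝ) < 1 - tanh w ^ 2)]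
  nlinarith [sq_nonneg (tanh w), abs_nonneg (tanh w)]

theorem abs_tanhSqDeriv2_le (w : ℝ) : |tanhSqDeriv2 w| ≤ 2 := by
  have := tanh_sq_lt_one w
  have := sq_nonneg (tanh w)
  rw [tanhSqDeriv2, abs_le]
  constructor <;> nlinarith

theorem integrable_gaussianReal_iff {μ : ℝ} {v : ℝ≥0} (hv : v ≠ 0) {f : ℝ → ℝ} :
    Integrable f (gaussianReal μ v) ↔ Integrable (fun x => gaussianPDFReal μ v x * f x) := by
  rw [gaussianReal_of_var_ne_zero μ hv,
    integrable_withDensity_iff_integrable_smul' (measurable_gaussianPDF μ v)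
      (ae_of_all _ fun _ => gaussianPDF_lt_top)]
  simp only [toReal_gaussianPDF, smul_eq_mul]

theorem hasDerivAt_gaussianPDFReal_zero_one (x : ℝ) :
    HasDerivAt (gaussianPDFReal 0 1) (-x * gaussianPDFReal 0 1 x) x := by
  have h : HasDerivAt (fun x => (√(2 * π))⁻¹ * rexp (-x ^ 2 / 2))
      ((√(2 * π))⁻¹ * (rexp (-x ^ 2 / 2) * (-(2 * x) / 2))) x := by
    refine (((((hasDerivAt_pow 2 x).neg).div_const 2).exp).const_mul _).congr_deriv ?_
    simp
  convert h using 1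
  · ext; simp [gaussianPDFReal]
  · simp [gaussianPDFReal]; ring

/-- Gaussian integration by parts (Stein's lemma). -/
theorem integral_mul_eq_integral_deriv_gaussianReal {g g' : ℝ → ℝ} {C : ℝ}
    (hg : ∀ x, HasDerivAt g (g' x) x) (hgC : ∀ x, |g x| ≤ C)
    (hg' : Integrable g' (gaussianReal 0 1)) :
    ∫ x, x * g x ∂gaussianReal 0 1 = ∫ x, g' x ∂gaussianReal 0 1 := by
  set p := gaussianPDFReal 0 1
  have hgm : AEStronglyMeasurable g :=
    (continuous_iff_continuousAt.2 fun x => (hg x).continuousAt).aestronglyMeasurable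
  have hgb : ∀ᵐ x, ‖g x‖ ≤ C := ae_of_all _ hgC
  have hxp : Integrable fun x => p x * x :=
    (integrable_gaussianReal_iff one_ne_zero).1 ((memLp_id_gaussianReal 1).integrable le_rfl)
  have ibp := integral_mul_deriv_eq_deriv_mul_of_integrable (u := g) (v := p) (u' := g')
    (v' := fun x => -x * p x) (fun x _ => hg x) (fun x _ => hasDerivAt_gaussianPDFReal_zero_one x)
    ((hxp.neg.bdd_mul hgm hgb).congr
      (ae_of_all _ fun x => by simp only [Pi.mul_apply, Pi.neg_apply]; ring))
    (((integrable_gaussianReal_iff one_ne_zero).1 hg').congr (ae_of_all _ fun x => mul_comm _ _))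
    ((integrable_gaussianPDFReal 0 1).bdd_mul hgm hgb)
  rw [integral_gaussianReal_eq_integral_smul one_ne_zero,
    integral_gaussianReal_eq_integral_smul one_ne_zero]
  simp only [smul_eq_mul]
  calc ∫ x, p x * (x * g x) = -∫ x, g x * (-x * p x) := by
        rw [← integral_neg]; congr 1; ext x; ring
    _ = ∫ x, p x * g' x := by rw [ibp, neg_neg]; congr 1; ext x; ring

def meanTanhSq (a c : ℝ) : ℝ := ∫ u, tanh (a * u + c) ^ 2 ∂gaussianReal 0 1

theorem Etanh2_eq_meanTanhSq (a x : ℝ) :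
    Etanh2 a x = (meanTanhSq a x + meanTanhSq a (-x)) / 2 := by
  simp only [Etanh2, meanTanhSq, gauss, sub_eq_add_neg]

theorem hasDerivAt_meanTanhSq (a c : ℝ) :
    HasDerivAt (meanTanhSq · c) (a * ∫ u, tanhSqDeriv2 (a * u + c) ∂gaussianReal 0 1) a := by
  have hcont₁ : Continuous tanhSqDeriv := by unfold tanhSqDeriv; fun_prop
  have hcont₂ : Continuous tanhSqDeriv2 := by unfold tanhSqDeriv2; fun_prop
  have hid : Integrable (fun u : ℝ => u) (gaussianReal 0 1) :=
    (memLp_id_gaussianReal 1).integrable le_rfl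
  have hdiff : HasDerivAt (meanTanhSq · c)
      (∫ u, u * tanhSqDeriv (a * u + c) ∂gaussianReal 0 1) a := by
    refine (hasDerivAt_integral_of_dominated_loc_of_deriv_le (μ := gaussianReal 0 1)
      (F := fun b u => tanh (b * u + c) ^ 2) (F' := fun b u => u * tanhSqDeriv (b * u + c))
      (bound := fun u => 2 * |u|) (Metric.ball_mem_nhds a one_pos)
      (.of_forall fun b => by fun_prop) ?_ (by fun_prop) (ae_of_all _ fun u b _ => ?_)
      (hid.abs.const_mul 2) (ae_of_all _ fun u b _ => ?_)).2
    · refine Integrable.of_bound (by fun_prop) 1 (ae_of_all _ fun u => ?_)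
      rw [Real.norm_of_nonneg (sq_nonneg _)]
      exact (tanh_sq_lt_one _).le
    · rw [norm_mul, Real.norm_eq_abs, Real.norm_eq_abs, mul_comm]
      exact mul_le_mul_of_nonneg_right (abs_tanhSqDeriv_le _) (abs_nonneg _)
    · exact ((hasDerivAt_tanh_sq _).comp b ((hasDerivAt_mul_const u).add_const c)).congr_deriv
        (mul_comm _ _)
  have hinner (u : ℝ) : HasDerivAt (fun u => a * u + c) a u :=
    ((hasDerivAt_id u).const_mul a).add_const c |>.congr_deriv (mul_one a)
  have hstein := integral_mul_eq_integral_deriv_gaussianReal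
    (g := fun u => tanhSqDeriv (a * u + c))
    (fun u => (hasDerivAt_tanhSqDeriv _).comp u (hinner u))
    (fun u => abs_tanhSqDeriv_le (a * u + c))
    (Integrable.of_bound (by fun_prop) (2 * |a|) (ae_of_all _ fun u => by
      rw [norm_mul, Real.norm_eq_abs, Real.norm_eq_abs]
      exact mul_le_mul_of_nonneg_right (abs_tanhSqDeriv2_le _) (abs_nonneg _)))
  rwa [hstein, integral_mul_const, mul_comm] at hdiff

theorem abs_meanTanhSq_sub_le (c : ℝ) {a b : ℝ} (hb : 0 ≤ b) (hba : b ≤ a) :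
    |meanTanhSq a c - meanTanhSq b c| ≤ 2 * a * (a - b) := by
  have hderiv_le : ∀ s ∈ Set.Icc b a,
      ‖s * ∫ u, tanhSqDeriv2 (s * u + c) ∂gaussianReal 0 1‖ ≤ 2 * a := fun s hs => by
    have hint : ‖∫ u, tanhSqDeriv2 (s * u + c) ∂gaussianReal 0 1‖ ≤ 2 := by
      simpa using norm_integral_le_of_norm_le_const (μ := gaussianReal 0 1)
        (ae_of_all _ fun u => (Real.norm_eq_abs _).trans_le (abs_tanhSqDeriv2_le (s * u + c)))
    rw [norm_mul, Real.norm_of_nonneg (hb.trans hs.1)]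
    nlinarith [hs.2, norm_nonneg (∫ u, tanhSqDeriv2 (s * u + c) ∂gaussianReal 0 1)]
  simpa [Real.norm_eq_abs, abs_of_nonneg (sub_nonneg.2 hba)] using
    (convex_Icc b a).norm_image_sub_le_of_norm_hasDerivWithin_le
      (fun s _ => (hasDerivAt_meanTanhSq s c).hasDerivWithinAt) hderiv_le
      (Set.left_mem_Icc.2 hba) (Set.right_mem_Icc.2 hba)

theorem abs_meanTanhSq_sqrt_sub_le (c : ℝ) {p q : ℝ} (hq : 0 ≤ q) (hqp : q ≤ p) :
    |meanTanhSq √(2 * p) c - meanTanhSq √(2 * q) c| ≤ 4 * (p - q) := by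
  have hba : √(2 * q) ≤ √(2 * p) := Real.sqrt_le_sqrt (by linarith)
  refine (abs_meanTanhSq_sub_le c (Real.sqrt_nonneg _) hba).trans ?_
  nlinarith [Real.sq_sqrt (by linarith : (0 : ℝ) ≤ 2 * p),
    Real.sq_sqrt (by linarith : (0 : ℝ) ≤ 2 * q),
    mul_nonneg (sub_nonneg.2 hba) (Real.sqrt_nonneg (2 * q))]

theorem lipschitzWith_meanTanhSq_sqrt (c : ℝ) :
    LipschitzWith 4 fun q => meanTanhSq √(2 * q) c := by
  have hmax (q : ℝ) : √(2 * q) = √(2 * max q 0) := by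
    rcases le_total q 0 with h | h
    · simp [max_eq_right h, Real.sqrt_eq_zero'.2 (by linarith : 2 * q ≤ 0)]
    · rw [max_eq_left h]
  refine LipschitzWith.of_dist_le_mul fun p q => ?_
  wlog hqp : max q 0 ≤ max p 0 generalizing p q
  · rw [dist_comm, dist_comm p]
    exact this q p (le_of_not_ge hqp)
  simp only [Real.dist_eq, hmax p, hmax q, NNReal.coe_ofNat]
  refine (abs_meanTanhSq_sqrt_sub_le c (le_max_right q 0) hqp).trans ?_
  have := abs_max_sub_max_le_abs p q 0
  linarith [le_abs_self (max p 0 - max q 0)]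

theorem lipschitzWith_Etanh2_sqrt (x : ℝ) : LipschitzWith 4 fun q => Etanh2 √(2 * q) x := by
  refine LipschitzWith.of_dist_le_mul fun p q => ?_
  have h₁ := (lipschitzWith_meanTanhSq_sqrt x).dist_le_mul p q
  have h₂ := (lipschitzWith_meanTanhSq_sqrt (-x)).dist_le_mul p q
  simp only [Real.dist_eq, Etanh2_eq_meanTanhSq, NNReal.coe_ofNat] at h₁ h₂ ⊢
  rw [← sub_div, add_sub_add_comm, abs_div, abs_two, div_le_iff₀ two_pos]
  linarith [abs_add_le (meanTanhSq √(2 * p) x - meanTanhSq √(2 * q) x)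
    (meanTanhSq √(2 * p) (-x) - meanTanhSq √(2 * q) (-x))]

theorem Etanh2_nonneg (a x : ℝ) : 0 ≤ Etanh2 a x := by
  unfold Etanh2
  positivity

theorem existsUnique_coupled_eq_of_lipschitzWith {f₁ f₂ : ℝ → ℝ} {K : ℝ≥0} {t : ℝ}
    (h₁ : LipschitzWith K f₁) (h₂ : LipschitzWith K f₂) (ht : 0 ≤ t) (hKt : K * t < 1)
    (y : ℝ × ℝ) : ∃! z : ℝ × ℝ, z.1 = f₁ (y.1 + t * z.2) ∧ z.2 = f₂ (y.2 + t * z.1) := by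
  have hshift (c : ℝ) : LipschitzWith t.toNNReal fun q : ℝ => c + t * q :=
    LipschitzWith.of_dist_le_mul fun p q => by
      simp [Real.dist_eq, ← mul_sub, abs_mul, abs_of_nonneg ht, ht]
  have hF : LipschitzWith (K * t.toNNReal)
      fun z : ℝ × ℝ => (f₁ (y.1 + t * z.2), f₂ (y.2 + t * z.1)) := by
    simpa using ((h₁.comp (hshift y.1)).comp LipschitzWith.prod_snd).prodMk
      ((h₂.comp (hshift y.2)).comp LipschitzWith.prod_fst)
  have hcontr : ContractingWith (K * t.toNNReal) _ :=
    ⟨by rwa [← NNReal.coe_lt_coe, NNReal.coe_mul, Real.coe_toNNReal t ht], hF⟩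
  refine ⟨ContractingWith.fixedPoint _ hcontr, ?_, fun z hz => ?_⟩
  · exact Prod.ext_iff.1 hcontr.fixedPoint_isFixedPt.symm
  · exact hcontr.fixedPoint_unique (Prod.ext hz.1.symm hz.2.symm)

/-- Unique fixed point for the bipartite model at high temperature (Remark 1.2 and the
fixed-point assertion of Theorem 1.5, with `β⋆ ≥ 1/(2√2)`, i.e. `t⋆ ≥ 1/16`): for every
`t ∈ [0,1/16)`, `y ∈ [0,∞)²` and `x ∈ ℝ²` there is exactly one `z ∈ [0,∞)²` with
`zᵢ = E[tanh²(√(2(yᵢ + t z_{3−i})) η + xᵢ χ)]` for `i = 1,2`. -/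
theorem unique_fixed_point_bipartite :
    ∀ t ∈ Set.Ico (0 : ℝ) (1 / 16), ∀ y : ℝ × ℝ, 0 ≤ y.1 → 0 ≤ y.2 → ∀ x : ℝ × ℝ,
      ∃! z : ℝ × ℝ, IsFPy t y x z := by
  rintro t ⟨ht0, ht1⟩ y - - x
  obtain ⟨z, hz, huniq⟩ := existsUnique_coupled_eq_of_lipschitzWith
    (lipschitzWith_Etanh2_sqrt x.1) (lipschitzWith_Etanh2_sqrt x.2) ht0 (by norm_num; linarith) y
  refine ⟨z, ⟨?_, ?_, hz⟩, fun w hw => huniq w hw.2.2⟩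
  · exact hz.1 ▸ Etanh2_nonneg _ _
  · exact hz.2 ▸ Etanh2_nonneg _ _
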